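/- arXiv:1301.6157 — 4 statements merged into one kernel-verified Lean document; each statement's English description precedes it below -/
import Mathlib

section
/- Let n, w, γ be positive integers with w+γ ≤ n and gcd(n, w+γ)=1, and set V = lcm(w, w+1, ..., w+γ-1)/w, L = (1/n)·C(n, w+γ), α = L·V·(w+γ). Then V·Σ_{p=1}^{γ} C(γ-1, p-1)·C(n-γ-1, w+γ-p-1)·(w/(w+γ-p)) = (w/(n-γ))·α. -/
/-!
The absorption identity `C(m-1, k-1) / k = C(m, k) / m`, applied with `m = n - γ` and
`k = w + γ - p`, turns every summand into `w/(n-γ) · C(γ-1, p-1) · C(n-γ, w+γ-p)`.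
Vandermonde's identity sums these to `w/(n-γ) · C(n-1, w+γ-1)`, and absorption once more gives
`C(n-1, w+γ-1) = (w+γ) · C(n, w+γ) / n = (w+γ) · L`; the factor `V` is common to both sides.
-/

open Finset

theorem Nat.sum_range_choose_mul_choose_of_le {a b k : ℕ} (h : a ≤ k) :
    ∑ i ∈ range (a + 1), a.choose i * b.choose (k - i) = (a + b).choose k := by
  rw [Nat.add_choose_eq,
    Nat.sum_antidiagonal_eq_sum_range_succ (fun i j => a.choose i * b.choose j)]
  refine sum_subset (range_subset_range.2 (by omega)) fun i _ hi => ?_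
  rw [Nat.choose_eq_zero_of_lt (by simpa using hi), zero_mul]

theorem Nat.sum_Icc_choose_pred_mul_choose {c m k : ℕ} (hc : 0 < c) (hck : c ≤ k) :
    ∑ p ∈ Icc 1 c, (c - 1).choose (p - 1) * m.choose (k - p) = (c - 1 + m).choose (k - 1) := by
  obtain ⟨a, rfl⟩ : ∃ a, c = a + 1 := ⟨c - 1, by omega⟩
  simp only [Nat.add_sub_cancel]
  rw [← Nat.sum_range_choose_mul_choose_of_le (by omega : a ≤ k - 1),
    ← Ico_add_one_right_eq_Icc, sum_Ico_eq_sum_range]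
  refine sum_congr (by simp) fun i _ => ?_
  congr 2 <;> omega

theorem Nat.cast_choose_pred_div {m k : ℕ} (hm : 0 < m) (hk : 0 < k) :
    ((m - 1).choose (k - 1) : ℚ) / k = m.choose k / m := by
  obtain ⟨m, rfl⟩ : ∃ m', m = m' + 1 := ⟨m - 1, by omega⟩
  obtain ⟨k, rfl⟩ : ∃ k', k = k' + 1 := ⟨k - 1, by omega⟩
  have h := Nat.add_one_mul_choose_eq m k
  simp only [Nat.add_sub_cancel]
  rw [div_eq_div_iff (by positivity) (by positivity)]
  exact_mod_cast (mul_comm _ _).trans h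

theorem stmt_3_general (n w γ : ℕ) (hw : 0 < w) (hγ : 0 < γ)
    (hle : w + γ ≤ n)
    (V L α : ℚ)
    (hL : L = (Nat.choose n (w + γ) : ℚ) / n)
    (hα : α = L * V * (w + γ)) :
    V * ∑ p ∈ Finset.Icc 1 γ,
        (Nat.choose (γ - 1) (p - 1) : ℚ) * (Nat.choose (n - γ - 1) (w + γ - p - 1) : ℚ) *
          ((w : ℚ) / ((w : ℚ) + γ - p))
      = ((w : ℚ) / ((n : ℚ) - γ)) * α := by
  have hterm : ∀ p ∈ Icc 1 γ,
      ((γ - 1).choose (p - 1) : ℚ) * (n - γ - 1).choose (w + γ - p - 1) * (w / (w + γ - p))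
        = w / (n - γ) * ((γ - 1).choose (p - 1) * (n - γ).choose (w + γ - p) : ℕ) := by
    intro p hp
    obtain ⟨hp1, hpγ⟩ := mem_Icc.1 hp
    have habsorb := Nat.cast_choose_pred_div (m := n - γ) (k := w + γ - p) (by omega) (by omega)
    rw [Nat.cast_sub (by omega), Nat.cast_sub (by omega), Nat.cast_add] at habsorb
    calc _ = (w : ℚ) * (γ - 1).choose (p - 1) *
            ((n - γ - 1).choose (w + γ - p - 1) / (w + γ - p)) := by ring
      _ = _ := by rw [habsorb]; push_cast; ring
  have habsorb_row := Nat.cast_choose_pred_div (m := n) (k := w + γ) (by omega) (by omega)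
  push_cast at habsorb_row
  rw [sum_congr rfl hterm, ← mul_sum, ← Nat.cast_sum,
    Nat.sum_Icc_choose_pred_mul_choose hγ (by omega), show γ - 1 + (n - γ) = n - 1 by omega,
    hα, hL, ← habsorb_row]
  field_simp

/-- The repair-bandwidth identity for the canonical code: with
`V = lcm(w,…,w+γ-1)/w`, `L = C(n,w+γ)/n` and `α = L·V·(w+γ)`,
`V·Σ_{p=1}^{γ} C(γ-1,p-1)·C(n-γ-1,w+γ-p-1)·(w/(w+γ-p)) = (w/(n-γ))·α`. -/
theorem stmt_3 (n w γ : ℕ) (hn : 0 < n) (hw : 0 < w) (hγ : 0 < γ)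
    (hle : w + γ ≤ n) (hcop : Nat.gcd n (w + γ) = 1)
    (V L α : ℚ)
    (hV : V = ((Finset.range γ).lcm (fun i => w + i) : ℚ) / w)
    (hL : L = (Nat.choose n (w + γ) : ℚ) / n)
    (hα : α = L * V * (w + γ)) :
    V * ∑ p ∈ Finset.Icc 1 γ,
        (Nat.choose (γ - 1) (p - 1) : ℚ) * (Nat.choose (n - γ - 1) (w + γ - p - 1) : ℚ) *
          ((w : ℚ) / ((w : ℚ) + γ - p))
      = ((w : ℚ) / ((n : ℚ) - γ)) * α :=
  stmt_3_general n w γ hw hγ hle V L α hL hα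
end

section
/- Let n, w, γ be positive integers with w+γ ≤ n and let V be a positive integer. Define ρ_s = V·Σ_{p=1}^{min(s, w+γ)} C(s,p)·C(n-s, w+γ-p)·min(p, w) for 0 ≤ s ≤ n (with ρ_0 = 0). Then for all 1 ≤ s ≤ w, ρ_s - ρ_{s-1} = V·(w+γ)·C(n, w+γ)/n. -/
open Finset

lemma vand (m n k : ℕ) : (m + n).choose k = ∑ i ∈ range (k+1), m.choose i * n.choose (k - i) := by
  rw [Nat.add_choose_eq, Finset.Nat.sum_antidiagonal_eq_sum_range_succ_mk]

lemma nat_key (n s k : ℕ) (hs1 : 1 ≤ s) (hsn : s ≤ n) (hk1 : 1 ≤ k) :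
    ∑ p ∈ Icc 1 (min s k), s.choose p * ((n - s).choose (k - p) * p)
      = s * (n - 1).choose (k - 1) := by
  have hext : ∑ p ∈ Icc 1 (min s k), s.choose p * ((n - s).choose (k - p) * p)
      = ∑ p ∈ Icc 1 k, s.choose p * ((n - s).choose (k - p) * p) := by
    apply Finset.sum_subset
    · intro x hx; simp only [mem_Icc] at *; exact ⟨hx.1, hx.2.trans (min_le_right _ _)⟩
    · intro x hx hnx
      simp only [mem_Icc, not_and, not_le] at hx hnx
      have h := hnx hx.1
      have : s < x := by omega
      rw [Nat.choose_eq_zero_of_lt this, zero_mul]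
  rw [hext]
  have hterm : ∀ p ∈ Icc 1 k, s.choose p * ((n - s).choose (k - p) * p)
      = s * ((s-1).choose (p-1) * (n - s).choose (k - p)) := by
    intro p hp
    simp only [mem_Icc] at hp
    obtain ⟨m, rfl⟩ := Nat.exists_eq_add_of_le' hs1
    obtain ⟨j, rfl⟩ := Nat.exists_eq_add_of_le' hp.1
    have key := Nat.add_one_mul_choose_eq m j
    simp only [Nat.add_sub_cancel]
    calc (m+1).choose (j+1) * ((n - (m+1)).choose (k - (j+1)) * (j+1))
        = ((m+1).choose (j+1) * (j+1)) * (n - (m+1)).choose (k - (j+1)) := by ring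
      _ = ((m+1) * m.choose j) * (n - (m+1)).choose (k - (j+1)) := by rw [← key]
      _ = (m+1) * (m.choose j * (n - (m+1)).choose (k - (j+1))) := by ring
  rw [Finset.sum_congr rfl hterm, ← Finset.mul_sum]
  congr 1
  have hn1 : n - 1 = (s - 1) + (n - s) := by omega
  rw [hn1, vand]
  rw [show Icc 1 k = Ico 1 (k+1) by rfl, Finset.sum_Ico_eq_sum_range]
  have hk' : k - 1 + 1 = k := by omega
  rw [← hk']
  apply Finset.sum_congr rfl
  intro i hi
  simp only [mem_range] at hi
  congr 2 <;> omega

/-- Uniform rank accumulation: with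
`ρ_s = V·Σ_{p=1}^{min(s,w+γ)} C(s,p)·C(n-s,w+γ-p)·min(p,w)`,
for `1 ≤ s ≤ w` the increment satisfies `ρ_s - ρ_{s-1} = V·(w+γ)·C(n,w+γ)/n` (= α). -/
theorem stmt_8 (n w γ V : ℕ) (hn : 0 < n) (hw : 0 < w) (hγ : 0 < γ) (hV : 0 < V)
    (hle : w + γ ≤ n) (ρ : ℕ → ℚ)
    (hρ : ∀ s, ρ s = (V : ℚ) * ∑ p ∈ Finset.Icc 1 (min s (w + γ)),
        (Nat.choose s p : ℚ) * (Nat.choose (n - s) (w + γ - p) : ℚ) * (min p w : ℕ)) :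
    ∀ s, 1 ≤ s → s ≤ w →
      ρ s - ρ (s - 1) = (V : ℚ) * ((w : ℚ) + γ) * (Nat.choose n (w + γ) : ℚ) / n := by
  have key : ∀ t, t ≤ w → ρ t = (V:ℚ) * (t * ((n-1).choose (w+γ-1) : ℕ)) := by
    intro t ht
    rw [hρ]
    congr 1
    rcases Nat.eq_zero_or_pos t with rfl | ht1
    · simp
    · have h := nat_key n t (w+γ) ht1 (by omega) (by omega)
      calc (∑ p ∈ Icc 1 (min t (w+γ)), (t.choose p : ℚ) * ((n-t).choose (w+γ-p) : ℚ) * (min p w : ℕ))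
          = ((∑ p ∈ Icc 1 (min t (w+γ)), t.choose p * ((n-t).choose (w+γ-p) * p) : ℕ) : ℚ) := by
            rw [Nat.cast_sum]
            apply Finset.sum_congr rfl
            intro p hp
            simp only [mem_Icc] at hp
            have hpw : min p w = p := by
              have h2 : p ≤ t := le_trans hp.2 (min_le_left _ _)
              omega
            rw [hpw]; push_cast; ring
        _ = (t:ℚ) * ((n-1).choose (w+γ-1) : ℕ) := by rw [h]; push_cast; ring
  intro s hs1 hsw
  rw [key s hsw, key (s-1) (by omega)]
  have hA : (n:ℚ) * ((n-1).choose (w+γ-1) : ℕ) = ((w:ℚ)+γ) * (n.choose (w+γ) : ℕ) := by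
    have := Nat.add_one_mul_choose_eq (n-1) (w+γ-1)
    rw [show n-1+1 = n by omega, show w+γ-1+1 = w+γ by omega] at this
    exact_mod_cast this.trans (mul_comm _ _)
  have hcast : ((s-1 : ℕ) : ℚ) = (s:ℚ) - 1 := by
    push_cast [Nat.cast_sub hs1]; ring
  rw [hcast]
  have hn0 : (n:ℚ) ≠ 0 := Nat.cast_ne_zero.mpr hn.ne'
  field_simp
  linear_combination hA
end

section
/- Let n, w, γ be positive integers with w+γ ≤ n, V a positive integer, and define ρ_s = V·Σ_{p=1}^{min(s,w+γ)} C(s,p)·C(n-s, w+γ-p)·min(p,w). Then ρ_n = V·C(n, w+γ)·w. Moreover ρ_{n-γ} = ρ_n, i.e., the rank saturates at s = n - γ. -/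
open Finset

lemma vander_aux (a b k : ℕ) :
    ∑ p ∈ range (k + 1), Nat.choose a p * Nat.choose b (k - p) = Nat.choose (a + b) k := by
  rw [Nat.add_choose_eq, Finset.Nat.sum_antidiagonal_eq_sum_range_succ_mk]

lemma key_aux (n w γ s : ℕ) (hw : 0 < w) (hs : s ≤ n) (hγ' : n - s ≤ γ) (hle : w + γ ≤ n) :
    ∑ p ∈ Finset.Icc 1 (min s (w + γ)),
        Nat.choose s p * Nat.choose (n - s) (w + γ - p) * min p w
      = Nat.choose n (w + γ) * w := by
  have h1 : ∑ p ∈ Finset.Icc 1 (min s (w + γ)),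
      Nat.choose s p * Nat.choose (n - s) (w + γ - p) * min p w
      = ∑ p ∈ range (w + γ + 1),
      Nat.choose s p * Nat.choose (n - s) (w + γ - p) * min p w := by
    apply Finset.sum_subset
    · intro p hp
      simp only [mem_Icc, mem_range] at *
      omega
    · intro p hp hnp
      simp only [mem_Icc, mem_range, not_and, not_le] at hp hnp
      rcases Nat.eq_zero_or_pos p with h | h
      · simp [h]
      · have hsp : s < p := by
          have := hnp h
          omega
        rw [Nat.choose_eq_zero_of_lt hsp]; ring
  rw [h1]
  have h2 : ∀ p ∈ range (w + γ + 1),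
      Nat.choose s p * Nat.choose (n - s) (w + γ - p) * min p w
      = Nat.choose s p * Nat.choose (n - s) (w + γ - p) * w := by
    intro p hp
    rcases le_or_gt w p with h | h
    · rw [min_eq_right h]
    · have hz : Nat.choose (n - s) (w + γ - p) = 0 :=
        Nat.choose_eq_zero_of_lt (by omega)
      rw [hz]; ring
  rw [Finset.sum_congr rfl h2, ← Finset.sum_mul]
  congr 1
  have := vander_aux s (n - s) (w + γ)
  rwa [Nat.add_sub_cancel' hs] at this

/-- With `ρ_s = V·Σ_{p=1}^{min(s,w+γ)} C(s,p)·C(n-s,w+γ-p)·min(p,w)`, one has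
`ρ_n = V·C(n,w+γ)·w` and the rank saturates at `s = n - γ`: `ρ_{n-γ} = ρ_n`. -/
theorem stmt_10 (n w γ V : ℕ) (hn : 0 < n) (hw : 0 < w) (hγ : 0 < γ) (hV : 0 < V)
    (hle : w + γ ≤ n) (ρ : ℕ → ℕ)
    (hρ : ∀ s, ρ s = V * ∑ p ∈ Finset.Icc 1 (min s (w + γ)),
        Nat.choose s p * Nat.choose (n - s) (w + γ - p) * min p w) :
    ρ n = V * Nat.choose n (w + γ) * w ∧ ρ (n - γ) = ρ n := by
  have e1 : ρ n = V * Nat.choose n (w + γ) * w := by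
    rw [hρ, key_aux n w γ n hw le_rfl (by omega) hle, mul_assoc]
  refine ⟨e1, ?_⟩
  rw [hρ, key_aux n w γ (n - γ) hw (by omega) (by omega) hle, e1, mul_assoc]
end

section
/- For positive integers n, w, γ with w + γ ≤ n and gcd(n, w+γ) = 1: Σ_{p=1}^{γ} C(γ-1, p-1)·C(n-γ-1, w+γ-p-1)·(1/(w+γ-p)) = (1/(n-γ))·(1/n)·C(n, w+γ)·(w+γ), as an identity of rational numbers. -/
open Finset

/-! Writing `k = w + γ - p`, the absorption identity `C(m-1, k-1) / k = C(m, k) / m` with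
`m = n - γ` turns every summand into `C(γ-1, p-1) · C(n-γ, w+γ-p) / (n-γ)`. By Vandermonde the
remaining sum is `C(n-1, w+γ-1)`, and absorption once more, now with `m = n`, gives
`C(n-1, w+γ-1) = C(n, w+γ) · (w+γ) / n`. -/

namespace Nat

theorem cast_choose_sub_one_div {K : Type*} [Field K] [CharZero K] {m k : ℕ} (hm : 0 < m)
    (hk : 0 < k) : ((m - 1).choose (k - 1) : K) / k = m.choose k / m := by
  obtain ⟨m, rfl⟩ := exists_eq_add_one_of_ne_zero hm.ne'
  obtain ⟨k, rfl⟩ := exists_eq_add_one_of_ne_zero hk.ne'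
  rw [Nat.add_sub_cancel, Nat.add_sub_cancel,
    div_eq_div_iff (cast_ne_zero.2 k.succ_ne_zero) (cast_ne_zero.2 m.succ_ne_zero), mul_comm]
  exact_mod_cast add_one_mul_choose_eq m k

theorem add_choose_eq_sum_range_of_le {a k : ℕ} (b : ℕ) (h : a ≤ k) :
    (a + b).choose k = ∑ i ∈ range (a + 1), a.choose i * b.choose (k - i) := by
  rw [add_choose_eq, Finset.Nat.sum_antidiagonal_eq_sum_range_succ_mk]
  refine (sum_subset (range_subset_range.2 (by omega)) fun i _ hi ↦ ?_).symm
  rw [choose_eq_zero_of_lt (by simpa using hi), zero_mul]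

end Nat

theorem stmt_16_general (n w γ : ℕ) (hw : 0 < w) (hγ : 0 < γ)
    (hle : w + γ ≤ n) :
    ∑ p ∈ Finset.Icc 1 γ,
        (Nat.choose (γ - 1) (p - 1) : ℚ) * (Nat.choose (n - γ - 1) (w + γ - p - 1) : ℚ) *
          (1 / ((w : ℚ) + γ - p))
      = (1 / ((n : ℚ) - γ)) * (1 / (n : ℚ)) * (Nat.choose n (w + γ) : ℚ) * ((w : ℚ) + γ) := by
  have hnγ : ((n - γ : ℕ) : ℚ) = n - γ := Nat.cast_sub (by omega)
  have absorb : ∀ p ∈ Icc 1 γ,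
      ((γ - 1).choose (p - 1) : ℚ) * (n - γ - 1).choose (w + γ - p - 1) * (1 / ((w : ℚ) + γ - p))
        = (γ - 1).choose (p - 1) * (n - γ).choose (w + γ - p) / (n - γ) := by
    intro p hp
    rw [mem_Icc] at hp
    have hk : ((w + γ - p : ℕ) : ℚ) = w + γ - p := by rw [Nat.cast_sub (by omega), Nat.cast_add]
    rw [← hnγ, mul_div_assoc, ← Nat.cast_choose_sub_one_div (by omega) (by omega), hk]
    ring
  have vandermonde : ∑ p ∈ Icc 1 γ, ((γ - 1).choose (p - 1) * (n - γ).choose (w + γ - p) : ℚ)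
      = (n - 1).choose (w + γ - 1) := by
    norm_cast
    rw [show n - 1 = (γ - 1) + (n - γ) by omega, Nat.add_choose_eq_sum_range_of_le _ (by omega),
      ← Ico_add_one_right_eq_Icc, sum_Ico_eq_sum_range, show γ + 1 - 1 = γ - 1 + 1 by omega]
    refine sum_congr rfl fun i _ ↦ ?_
    rw [show 1 + i - 1 = i by omega, show w + γ - (1 + i) = w + γ - 1 - i by omega]
  have absorb_top : ((n - 1).choose (w + γ - 1) : ℚ) = n.choose (w + γ) / n * (w + γ) := by
    rw [← div_eq_iff (by positivity)]
    exact_mod_cast Nat.cast_choose_sub_one_div (K := ℚ) (by omega) (by omega)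
  rw [sum_congr rfl absorb, ← sum_div, vandermonde, absorb_top]
  ring

/-- The combinatorial identity equating the two expressions for the repair
bandwidth of the canonical code:
`Σ_{p=1}^{γ} C(γ-1,p-1)·C(n-γ-1,w+γ-p-1)/(w+γ-p) = (1/(n-γ))·(1/n)·C(n,w+γ)·(w+γ)`. -/
theorem stmt_16 (n w γ : ℕ) (hn : 0 < n) (hw : 0 < w) (hγ : 0 < γ)
    (hle : w + γ ≤ n) (hcop : Nat.gcd n (w + γ) = 1) :
    ∑ p ∈ Finset.Icc 1 γ,
        (Nat.choose (γ - 1) (p - 1) : ℚ) * (Nat.choose (n - γ - 1) (w + γ - p - 1) : ℚ) *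
          (1 / ((w : ℚ) + γ - p))
      = (1 / ((n : ℚ) - γ)) * (1 / (n : ℚ)) * (Nat.choose n (w + γ) : ℚ) * ((w : ℚ) + γ) :=
  stmt_16_general n w γ hw hγ hle
end
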